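/- Let g and h be binary morphisms A* → Σ*, and let g be marked. Consider the set B of all words e ∈ A⁺ satisfying z_h·g(e) = h(e)·z_h and minimal with this property (i.e., whenever e₁ is a prefix of e and z_h·g(e₁) = h(e₁)·z_h, then e₁ = ε or e₁ = e). Then B has at most two elements, and if B = {e, e'} with e ≠ e', then the first letter of e differs from the first letter of e'. -/

import Mathlib

/-- The two-letter alphabet `A = {a, b}`. -/
inductive Ltr : Type
  | a : Ltr
  | b : Ltr
  deriving DecidableEq

/-- Apply a morphism (given by the images of the letters) to a word. -/
def mapp {α σ : Type*} (g : α → List σ) (w : List α) : List σ :=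
  (w.map g).flatten

/-- The `n`-th power `tⁿ` of a word `t`. -/
def npow {σ : Type*} (t : List σ) (n : ℕ) : List σ :=
  (List.replicate n t).flatten

/-- A binary morphism is periodic if all images of letters are powers of a common word. -/
def Periodic {σ : Type*} (g : Ltr → List σ) : Prop :=
  ∃ t : List σ, ∀ x : Ltr, ∃ n : ℕ, g x = npow t n

/-- The equality set `E(g,h)`. -/
def EqSet {σ : Type*} (g h : Ltr → List σ) : Set (List Ltr) :=
  {u | mapp g u = mapp h u}

/-- `u` is a minimal element of `E(g,h)`: nonempty, in `E(g,h)`, and not a product of two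
nonempty elements of `E(g,h)`. -/
def MinEl {σ : Type*} (g h : Ltr → List σ) (u : List Ltr) : Prop :=
  u ≠ [] ∧ u ∈ EqSet g h ∧
    ∀ v w : List Ltr, v ≠ [] → w ≠ [] → v ∈ EqSet g h → w ∈ EqSet g h → u ≠ v ++ w

/-- The submonoid of the free monoid generated by a set `S` of words. -/
def gen {α : Type*} (S : Set (List α)) : Set (List α) :=
  {u | ∃ l : List (List α), (∀ v ∈ l, v ∈ S) ∧ u = l.flatten}

/-- A binary morphism is marked if the images of the two letters are nonempty and
begin with different letters. -/
def Marked {σ : Type*} (g : Ltr → List σ) : Prop :=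
  g Ltr.a ≠ [] ∧ g Ltr.b ≠ [] ∧ (g Ltr.a).head? ≠ (g Ltr.b).head?

open Classical in
/-- Longest common prefix of two words. -/
noncomputable def lcp {σ : Type*} : List σ → List σ → List σ
  | x :: xs, y :: ys => if x = y then x :: lcp xs ys else []
  | _, _ => []

/-- `z_h`: the longest common prefix of `h(ab)` and `h(ba)`. -/
noncomputable def zh {σ : Type*} (h : Ltr → List σ) : List σ :=
  lcp (h Ltr.a ++ h Ltr.b) (h Ltr.b ++ h Ltr.a)

/-- `z̄_h`: the longest common suffix of `h(ab)` and `h(ba)`. -/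
noncomputable def zbar {σ : Type*} (h : Ltr → List σ) : List σ :=
  (lcp (h Ltr.a ++ h Ltr.b).reverse ((h Ltr.b ++ h Ltr.a).reverse)).reverse

/-- Componentwise concatenation in `Δ* × Δ*`. -/
def pprod {α : Type*} (p q : List α × List α) : List α × List α :=
  (p.1 ++ q.1, p.2 ++ q.2)

/-- The coincidence set `I(g,h) = {(u,v) | g(u) = h(v)}`. -/
def CoinSet {α σ : Type*} (g h : α → List σ) : Set (List α × List α) :=
  {p | mapp g p.1 = mapp h p.2}

/-- Minimal elements of the coincidence set: elements other than `(ε,ε)` that are not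
a product of two elements of `I(g,h) \ {(ε,ε)}`. -/
def MinCoin {α σ : Type*} (g h : α → List σ) (p : List α × List α) : Prop :=
  p ≠ ([], []) ∧ p ∈ CoinSet g h ∧
    ¬ ∃ q r : List α × List α, q ≠ ([], []) ∧ r ≠ ([], []) ∧
      q ∈ CoinSet g h ∧ r ∈ CoinSet g h ∧ p = pprod q r

/-- `(e,f)` is a block of `(g,h)`: nonempty words with `z_h·g(e) = h(f)·z_h`, minimal
with this property. -/
def MinBlock {σ : Type*} (g h : Ltr → List σ) (e f : List Ltr) : Prop :=
  e ≠ [] ∧ f ≠ [] ∧ zh h ++ mapp g e = mapp h f ++ zh h ∧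
    ∀ u v : List Ltr, u <+: e → v <+: f →
      zh h ++ mapp g u = mapp h v ++ zh h → (u = [] ∧ v = []) ∨ (u = e ∧ v = f)

/-- `e` is a nonempty word with `z_h·g(e) = h(e)·z_h`, minimal with this property. -/
def MinEqBlock {σ : Type*} (g h : Ltr → List σ) (e : List Ltr) : Prop :=
  e ≠ [] ∧ zh h ++ mapp g e = mapp h e ++ zh h ∧
    ∀ e₁ : List Ltr, e₁ <+: e → zh h ++ mapp g e₁ = mapp h e₁ ++ zh h →
      e₁ = [] ∨ e₁ = e

/-- The binary morphism sending `a ↦ x` and `b ↦ y`. -/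
def two {σ : Type*} (x y : List σ) : Ltr → List σ
  | Ltr.a => x
  | Ltr.b => y

/-- A counterexample: the minimal generating set of `E(g,h)` has at least two elements,
`g` is marked, `h` is not marked, `|g(a)| > |h(a)|` and `|g(b)| < |h(b)|`. -/
def Counterexample {σ : Type*} (g h : Ltr → List σ) : Prop :=
  (∃ α β : List Ltr, MinEl g h α ∧ MinEl g h β ∧ α ≠ β) ∧
  Marked g ∧ ¬ Marked h ∧
  (h Ltr.a).length < (g Ltr.a).length ∧ (g Ltr.b).length < (h Ltr.b).length


/-!
The key combinatorial fact is that `z_h = lcp (h(ab)) (h(ba))` is a prefix of `h(x) z_h` for each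
letter `x`, hence of `h(u) z_h` for every word `u`. Consequently, for distinct letters `x ≠ y`, the
words `h(xs) z_h` and `h(yt) z_h` are either comparable (if `h(a)` and `h(b)` commute) or branch
exactly after `z_h`. Two blocks `e = p x s`, `e' = p y t` sharing a nonempty prefix `p` would then,
because the marked morphism `g` separates `g(xs)` from `g(yt)` at their first letter, satisfy
`z_h g(p) = h(p) z_h`, contradicting the minimality of `e`. So a block is determined by its first
letter.
-/

section Lcp
variable {α : Type*}

lemma lcp_nil_left (v : List α) : lcp [] v = [] := by
  cases v <;> rfl

lemma lcp_nil_right (u : List α) : lcp u [] = [] := by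
  cases u <;> rfl

lemma lcp_cons_cons_of_eq (x : α) (xs ys : List α) :
    lcp (x :: xs) (x :: ys) = x :: lcp xs ys := by
  rw [lcp]; exact if_pos rfl

lemma lcp_cons_cons_of_ne {x y : α} (hxy : x ≠ y) (xs ys : List α) :
    lcp (x :: xs) (y :: ys) = [] := by
  rw [lcp]; exact if_neg hxy

lemma lcp_comm (u v : List α) : lcp u v = lcp v u := by
  induction u generalizing v with
  | nil => rw [lcp_nil_left, lcp_nil_right]
  | cons x xs ih =>
    cases v with
    | nil => rw [lcp_nil_left, lcp_nil_right]
    | cons y ys =>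
      by_cases hxy : x = y
      · subst hxy; rw [lcp_cons_cons_of_eq, lcp_cons_cons_of_eq, ih]
      · rw [lcp_cons_cons_of_ne hxy, lcp_cons_cons_of_ne (Ne.symm hxy)]

lemma lcp_append_append (c u v : List α) : lcp (c ++ u) (c ++ v) = c ++ lcp u v := by
  induction c with
  | nil => rfl
  | cons x xs ih => rw [List.cons_append, List.cons_append, lcp_cons_cons_of_eq, ih]; rfl

lemma lcp_self (u : List α) : lcp u u = u := by
  simpa [lcp_nil_left] using lcp_append_append u [] []

lemma lcp_prefix_left (u v : List α) : lcp u v <+: u := by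
  induction u generalizing v with
  | nil => rw [lcp_nil_left]
  | cons x xs ih =>
    cases v with
    | nil => rw [lcp_nil_right]; exact List.nil_prefix
    | cons y ys =>
      by_cases hxy : x = y
      · subst hxy; rw [lcp_cons_cons_of_eq]; exact List.cons_prefix_cons.mpr ⟨rfl, ih ys⟩
      · rw [lcp_cons_cons_of_ne hxy]; exact List.nil_prefix

lemma lcp_prefix_right (u v : List α) : lcp u v <+: v :=
  lcp_comm u v ▸ lcp_prefix_left v u

lemma exists_lcp_append_singleton_prefix {u v : List α} (huv : ¬u <+: v) (hvu : ¬v <+: u) :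
    ∃ c c' : α, c ≠ c' ∧ lcp u v ++ [c] <+: u ∧ lcp u v ++ [c'] <+: v := by
  induction u generalizing v with
  | nil => exact absurd List.nil_prefix huv
  | cons x xs ih =>
    cases v with
    | nil => exact absurd List.nil_prefix hvu
    | cons y ys =>
      by_cases hxy : x = y
      · subst hxy
        simp only [List.cons_prefix_cons, true_and] at huv hvu
        obtain ⟨c, c', hcc', hc, hc'⟩ := ih huv hvu
        exact ⟨c, c', hcc', by simpa [lcp_cons_cons_of_eq] using hc,
          by simpa [lcp_cons_cons_of_eq] using hc'⟩
      · exact ⟨x, y, hxy, by simp [lcp_cons_cons_of_ne hxy], by simp [lcp_cons_cons_of_ne hxy]⟩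

/-- Euclid-style induction on `|A| + |B|`: when `|A| ≤ |B|` and `A` is a proper prefix of
`lcp (AB) (BA)`, then `B = AB'` and `lcp (AB) (BA) = A · lcp (AB') (B'A)`. -/
theorem lcp_append_comm_prefix_append (A B : List α) :
    lcp (A ++ B) (B ++ A) <+: A ++ lcp (A ++ B) (B ++ A) ∧
      lcp (A ++ B) (B ++ A) <+: B ++ lcp (A ++ B) (B ++ A) := by
  induction hn : A.length + B.length using Nat.strong_induction_on generalizing A B with
  | _ n ih =>
  wlog hAB : A.length ≤ B.length generalizing A B
  · have := this B A (by omega) (by omega)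
    rw [lcp_comm] at this
    exact this.symm
  set z := lcp (A ++ B) (B ++ A)
  rcases le_or_gt z.length A.length with hzA | hAz
  · have hzA' : z <+: A :=
      List.prefix_of_prefix_length_le (lcp_prefix_left _ _) (List.prefix_append A B) hzA
    have hzB : z <+: B :=
      List.prefix_of_prefix_length_le (lcp_prefix_right _ _) (List.prefix_append B A) (by omega)
    exact ⟨hzA'.trans (List.prefix_append _ _), hzB.trans (List.prefix_append _ _)⟩
  rcases eq_or_ne A [] with rfl | hA
  · simp [z, lcp_self]
  have hAB' : A <+: B :=
    List.prefix_of_prefix_length_le ((List.prefix_of_prefix_length_le (List.prefix_append A B)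
      (lcp_prefix_left _ _) hAz.le).trans (lcp_prefix_right _ _)) (List.prefix_append B A) hAB
  obtain ⟨B', rfl⟩ := hAB'
  have hz : z = A ++ lcp (A ++ B') (B' ++ A) := by
    simp only [z, List.append_assoc, lcp_append_append]
  obtain ⟨hA', hB'⟩ := ih (A.length + B'.length)
    (by simp [← hn, List.length_pos_iff.mpr hA]) A B' rfl
  rw [hz]
  refine ⟨(List.prefix_append_right_inj A).mpr hA', ?_⟩
  simpa only [List.append_assoc, List.prefix_append_right_inj] using
    hB'.trans ((List.prefix_append_right_inj B').mpr hA')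

end Lcp

section Prefix
variable {α : Type*}

lemma prefix_of_prefix_of_branch {u w P Q : List α} {d d' : α} (hd : d ≠ d')
    (hP : w ++ [d] <+: P) (hQ : w ++ [d'] <+: Q) (huP : u <+: P) (huQ : u <+: Q) : u <+: w := by
  rcases le_or_gt u.length w.length with hle | hlt
  · exact List.prefix_of_prefix_length_le huP ((List.prefix_append w [d]).trans hP) hle
  have hdu : w ++ [d] <+: u := List.prefix_of_prefix_length_le hP huP (by simpa using hlt)
  have hd'u : w ++ [d'] <+: u := List.prefix_of_prefix_length_le hQ huQ (by simpa using hlt)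
  exact absurd (by simpa using List.prefix_of_prefix_length_le hdu hd'u (by simp)) hd

lemma prefix_of_append_eq_of_branch {A B U V C D : List α} {d d' : α} (hd : d ≠ d')
    (hU : A ++ U = B ++ C) (hV : A ++ V = B ++ D) (hdU : [d] <+: U) (hd'V : [d'] <+: V) :
    B <+: A := by
  rcases List.prefix_or_prefix_of_prefix (List.prefix_append A U)
    (hU ▸ List.prefix_append B C) with ⟨r, rfl⟩ | hBA
  · rcases r with _ | ⟨r₀, r⟩
    · simp
    · rw [List.append_assoc, List.append_right_inj] at hU hV
      subst hU hV
      simp only [List.cons_append, List.singleton_prefix_cons_iff] at hdU hd'V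
      exact absurd (hdU.trans hd'V.symm) hd
  · exact hBA

lemma append_singleton_prefix_append {X Y z : List α} {c : α} (hX : X ≠ [])
    (hc : z ++ [c] <+: X ++ Y) (hz : z <+: Y ++ X) : z ++ [c] <+: X ++ z := by
  rcases List.prefix_or_prefix_of_prefix hz (List.prefix_append Y X) with hzY | hYz
  · exact List.prefix_of_prefix_length_le hc ((List.prefix_append_right_inj X).mpr hzY)
      (by simp [List.length_pos_iff.mpr hX])
  · exact hc.trans ((List.prefix_append_right_inj X).mpr hYz)

end Prefix

section Morphism
variable {σ : Type*}

@[simp] lemma mapp_nil (h : Ltr → List σ) : mapp h [] = [] := rfl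

@[simp] lemma mapp_cons (h : Ltr → List σ) (x : Ltr) (u : List Ltr) :
    mapp h (x :: u) = h x ++ mapp h u := by simp [mapp]

@[simp] lemma mapp_append (h : Ltr → List σ) (u v : List Ltr) :
    mapp h (u ++ v) = mapp h u ++ mapp h v := by simp [mapp]

lemma zh_prefix_append_zh (h : Ltr → List σ) (x : Ltr) : zh h <+: h x ++ zh h := by
  cases x
  · exact (lcp_append_comm_prefix_append (h Ltr.a) (h Ltr.b)).1
  · exact (lcp_append_comm_prefix_append (h Ltr.a) (h Ltr.b)).2

lemma zh_prefix_mapp_append_zh (h : Ltr → List σ) (u : List Ltr) :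
    zh h <+: mapp h u ++ zh h := by
  induction u with
  | nil => simp
  | cons x u ih =>
    rw [mapp_cons, List.append_assoc]
    exact (zh_prefix_append_zh h x).trans ((List.prefix_append_right_inj (h x)).mpr ih)

lemma append_mapp_comm {h : Ltr → List σ} {X : List σ} (hX : ∀ x, X ++ h x = h x ++ X)
    (v : List Ltr) : X ++ mapp h v = mapp h v ++ X := by
  induction v with
  | nil => simp
  | cons x v ih =>
    rw [mapp_cons, ← List.append_assoc, hX, List.append_assoc, ih, List.append_assoc]

lemma mapp_append_mapp_comm {h : Ltr → List σ} (hab : h Ltr.a ++ h Ltr.b = h Ltr.b ++ h Ltr.a)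
    (u v : List Ltr) : mapp h u ++ mapp h v = mapp h v ++ mapp h u := by
  refine append_mapp_comm (fun y => (append_mapp_comm (fun x => ?_) u).symm) v
  cases x <;> cases y <;> first | rfl | exact hab | exact hab.symm

/-- When `h(a)` and `h(b)` commute, `h(u) z_h` and `h(v) z_h` are both prefixes of
`h(uv) z_h = h(vu) z_h`. -/
lemma mapp_append_zh_prefix_or_prefix {h : Ltr → List σ}
    (hab : h Ltr.a ++ h Ltr.b = h Ltr.b ++ h Ltr.a) (u v : List Ltr) :
    mapp h u ++ zh h <+: mapp h v ++ zh h ∨ mapp h v ++ zh h <+: mapp h u ++ zh h := by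
  refine List.prefix_or_prefix_of_prefix (l₃ := mapp h u ++ mapp h v ++ zh h) ?_ ?_
  · rw [List.append_assoc]
    exact (List.prefix_append_right_inj _).mpr (zh_prefix_mapp_append_zh h v)
  · rw [mapp_append_mapp_comm hab, List.append_assoc]
    exact (List.prefix_append_right_inj _).mpr (zh_prefix_mapp_append_zh h u)

lemma exists_zh_branch {h : Ltr → List σ} (hab : h Ltr.a ++ h Ltr.b ≠ h Ltr.b ++ h Ltr.a)
    {x y : Ltr} (hxy : x ≠ y) (s t : List Ltr) :
    ∃ c c' : σ, c ≠ c' ∧ zh h ++ [c] <+: mapp h (x :: s) ++ zh h ∧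
      zh h ++ [c'] <+: mapp h (y :: t) ++ zh h := by
  have hne : ∀ u v : List σ, u.length = v.length → u ≠ v → ¬u <+: v :=
    fun u v hl huv hp => huv (hp.eq_of_length hl)
  have hlen : (h Ltr.a ++ h Ltr.b).length = (h Ltr.b ++ h Ltr.a).length := by simp [add_comm]
  obtain ⟨c, c', hcc', hc, hc'⟩ :=
    exists_lcp_append_singleton_prefix (hne _ _ hlen hab) (hne _ _ hlen.symm (Ne.symm hab))
  have ha : h Ltr.a ≠ [] := by rintro hh; simp [hh] at hab
  have hb : h Ltr.b ≠ [] := by rintro hh; simp [hh] at hab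
  have extend : ∀ {X Y : List σ} {c : σ} (u : List Ltr), X ≠ [] → zh h ++ [c] <+: X ++ Y →
      zh h <+: Y ++ X → zh h ++ [c] <+: X ++ mapp h u ++ zh h := fun u hX hc hz =>
    (append_singleton_prefix_append hX hc hz).trans <| by
      rw [List.append_assoc]
      exact (List.prefix_append_right_inj _).mpr (zh_prefix_mapp_append_zh h u)
  cases x <;> cases y <;> simp only [ne_eq, not_true_eq_false, reduceCtorEq] at hxy <;>
    simp only [mapp_cons]
  · exact ⟨c, c', hcc', extend s ha hc (lcp_prefix_right _ _),
      extend t hb hc' (lcp_prefix_left _ _)⟩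
  · exact ⟨c', c, Ne.symm hcc', extend s hb hc' (lcp_prefix_left _ _),
      extend t ha hc (lcp_prefix_right _ _)⟩

lemma eq_zh_of_branch (h : Ltr → List σ) {x y : Ltr} (hxy : x ≠ y) {s t : List Ltr}
    {w : List σ} {d d' : σ} (hd : d ≠ d') (hP : w ++ [d] <+: mapp h (x :: s) ++ zh h)
    (hQ : w ++ [d'] <+: mapp h (y :: t) ++ zh h) : w = zh h := by
  have branch_after_w : ∀ {u}, u <+: mapp h (x :: s) ++ zh h → u <+: mapp h (y :: t) ++ zh h →
      u <+: w := prefix_of_prefix_of_branch hd hP hQ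
  by_cases hab : h Ltr.a ++ h Ltr.b = h Ltr.b ++ h Ltr.a
  · have too_long : ∀ {R : List σ} {e : σ}, w ++ [e] <+: R → R <+: w → False := fun hR hRw => by
      have := hR.length_le.trans hRw.length_le
      simp at this
    rcases mapp_append_zh_prefix_or_prefix hab (x :: s) (y :: t) with hPQ | hQP
    · exact (too_long hP (branch_after_w (List.prefix_refl _) hPQ)).elim
    · exact (too_long hQ (branch_after_w hQP (List.prefix_refl _))).elim
  · obtain ⟨c, c', hcc', hc, hc'⟩ := exists_zh_branch hab hxy s t
    have hwz : w <+: zh h := prefix_of_prefix_of_branch hcc' hc hc'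
      ((List.prefix_append _ _).trans hP) ((List.prefix_append _ _).trans hQ)
    exact hwz.eq_of_length_le (branch_after_w ((List.prefix_append _ _).trans hc)
      ((List.prefix_append _ _).trans hc')).length_le

end Morphism

section Blocks
variable {σ : Type*}

lemma Marked.exists_injective_singleton_prefix {g : Ltr → List σ} (hg : Marked g) :
    ∃ c : Ltr → σ, Function.Injective c ∧ ∀ x, [c x] <+: g x := by
  obtain ⟨ha, hb, hab⟩ := hg
  obtain ⟨ca, ua, hua⟩ := List.exists_cons_of_ne_nil ha
  obtain ⟨cb, ub, hub⟩ := List.exists_cons_of_ne_nil hb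
  have hcab : ca ≠ cb := by simpa [hua, hub] using hab
  refine ⟨fun x => match x with | .a => ca | .b => cb, fun x y hxy => ?_, fun x => ?_⟩
  · cases x <;> cases y <;> first | rfl | exact absurd hxy hcab | exact absurd hxy.symm hcab
  · cases x
    · simp [hua]
    · simp [hub]

lemma MinEqBlock.eq_of_head?_eq {g h : Ltr → List σ} (hg : Marked g) {e e' : List Ltr}
    (he : MinEqBlock g h e) (he' : MinEqBlock g h e') (hhead : e.head? = e'.head?) : e = e' := by
  obtain ⟨hne, heq, hmin⟩ := he
  obtain ⟨hne', heq', hmin'⟩ := he'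
  by_cases hee' : e <+: e'
  · exact (hmin' e hee' heq).resolve_left hne
  by_cases he'e : e' <+: e
  · exact ((hmin e' he'e heq').resolve_left hne').symm
  exfalso
  obtain ⟨x, y, hxy, ⟨s, hs⟩, ⟨t, ht⟩⟩ := exists_lcp_append_singleton_prefix hee' he'e
  generalize lcp e e' = p at hs ht
  rw [List.append_assoc, List.singleton_append] at hs ht
  subst hs ht
  have hp : p ≠ [] := by
    rintro rfl
    simp only [List.nil_append, List.head?_cons, Option.some.injEq] at hhead
    exact hxy hhead
  obtain ⟨c, hc, hcg⟩ := hg.exists_injective_singleton_prefix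
  have hcg' : ∀ x u, [c x] <+: mapp g (x :: u) := fun x u => by
    rw [mapp_cons]; exact (hcg x).trans (List.prefix_append _ _)
  have regroup : ∀ {u}, zh h ++ mapp g (p ++ u) = mapp h (p ++ u) ++ zh h →
      (zh h ++ mapp g p) ++ mapp g u = mapp h p ++ (mapp h u ++ zh h) := fun hu => by
    simpa only [mapp_append, List.append_assoc] using hu
  have E := regroup heq
  have E' := regroup heq'
  obtain ⟨w, hw⟩ := prefix_of_append_eq_of_branch (hc.ne hxy) E E' (hcg' x s) (hcg' y t)
  have overflow : ∀ {u}, (zh h ++ mapp g p) ++ mapp g u = mapp h p ++ (mapp h u ++ zh h) →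
      w ++ mapp g u = mapp h u ++ zh h := fun hu => by
    rw [← List.append_right_inj (mapp h p), ← List.append_assoc, hw, hu]
  have hwz : w = zh h := eq_zh_of_branch h hxy (hc.ne hxy)
    (overflow E ▸ (List.prefix_append_right_inj w).mpr (hcg' x s))
    (overflow E' ▸ (List.prefix_append_right_inj w).mpr (hcg' y t))
  rcases hmin p (List.prefix_append _ _) (by rw [← hw, hwz]) with rfl | hpe
  · exact hp rfl
  · simpa using congrArg List.length hpe

end Blocks

lemma exists_subset_pair_of_injOn_head? {S : Set (List Ltr)} (hS : ∀ e ∈ S, e ≠ [])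
    (hinj : Set.InjOn List.head? S) : ∃ p q : List Ltr, S ⊆ {p, q} := by
  have unique : ∀ x : Ltr, ∃ p, ∀ e ∈ S, e.head? = some x → e = p := fun x => by
    by_cases hx : ∃ e ∈ S, e.head? = some x
    · obtain ⟨p, hp, hpx⟩ := hx
      exact ⟨p, fun e he hex => hinj he hp (hex.trans hpx.symm)⟩
    · exact ⟨[], fun e he hex => (hx ⟨e, he, hex⟩).elim⟩
  obtain ⟨p, hp⟩ := unique Ltr.a
  obtain ⟨q, hq⟩ := unique Ltr.b
  refine ⟨p, q, fun e he => ?_⟩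
  obtain ⟨x, u, rfl⟩ := List.exists_cons_of_ne_nil (hS _ he)
  cases x
  · exact Or.inl (hp _ he rfl)
  · exact Or.inr (hq _ he rfl)

/-- The set of nonempty minimal words `e` with `z_h·g(e) = h(e)·z_h`
has at most two elements, and distinct such words start with different letters
(`g` marked). -/
theorem stmt_13 {σ : Type*} (g h : Ltr → List σ) (hg : Marked g) :
    (∃ p q : List Ltr, {e : List Ltr | MinEqBlock g h e} ⊆ {p, q}) ∧
    (∀ e e' : List Ltr, MinEqBlock g h e → MinEqBlock g h e' → e ≠ e' →
      e.head? ≠ e'.head?) := by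
  have hinj : Set.InjOn List.head? {e : List Ltr | MinEqBlock g h e} :=
    fun _ he _ he' => MinEqBlock.eq_of_head?_eq hg he he'
  exact ⟨exists_subset_pair_of_injOn_head? (fun _ he => he.1) hinj,
    fun _ _ he he' hne => mt (hinj he he') hne⟩
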